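/- arXiv:2006.05114 — 7 statements merged into one kernel-verified Lean document; each statement's English description precedes it below -/
import Mathlib

section
/- For all complex numbers z1, z2 (with the convention 0·ln 0 = 0), |Im((z1·ln(|z1|²) − z2·ln(|z2|²))·(conj(z1) − conj(z2)))| ≤ 2|z1 − z2|². -/
/-!
The imaginary part equals
`(log |z₂|² − log |z₁|²) · Im(z₁ z̄₂)`. Assuming `|z₂| ≤ |z₁|`, the logarithmic factor is at most
`2 (|z₁| − |z₂|) / |z₂|` by `log x ≤ x − 1`, while `Im(z₁ z̄₂) = Im((z₁ − z₂) z̄₂)` is at most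
`|z₁ − z₂| |z₂|`; the factor `|z₂|` cancels and `|z₁| − |z₂| ≤ |z₁ − z₂|`.
-/

open Complex ComplexConjugate

theorem Real.log_sub_log_le_div {r s : ℝ} (hr : 0 < r) (hs : 0 < s) :
    Real.log r - Real.log s ≤ (r - s) / s := by
  calc Real.log r - Real.log s = Real.log (r / s) := (Real.log_div hr.ne' hs.ne').symm
    _ ≤ r / s - 1 := Real.log_le_sub_one_of_pos (div_pos hr hs)
    _ = (r - s) / s := by field_simp

namespace Complex

theorem im_mul_real_sub_mul_real_mul_conj_sub (z₁ z₂ : ℂ) (a b : ℝ) :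
    ((z₁ * a - z₂ * b) * (conj z₁ - conj z₂)).im = (b - a) * (z₁ * conj z₂).im := by
  simp only [mul_im, mul_re, sub_im, sub_re, conj_re, conj_im, ofReal_re, ofReal_im]
  ring

theorem abs_im_mul_conj_le (w₁ w₂ : ℂ) : |(w₁ * conj w₂).im| ≤ ‖w₁ - w₂‖ * ‖w₂‖ := by
  have hself : (w₂ * conj w₂).im = 0 := by rw [mul_conj, ofReal_im]
  calc |(w₁ * conj w₂).im| = |((w₁ - w₂) * conj w₂).im| := by
        rw [sub_mul, sub_im, hself, sub_zero]
    _ ≤ ‖(w₁ - w₂) * conj w₂‖ := abs_im_le_norm _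
    _ = ‖w₁ - w₂‖ * ‖w₂‖ := by rw [norm_mul, norm_conj]

theorem abs_log_norm_sub_mul_im_mul_conj_le_of_norm_le {w₁ w₂ : ℂ} (h : ‖w₂‖ ≤ ‖w₁‖) :
    |(Real.log ‖w₁‖ - Real.log ‖w₂‖) * (w₁ * conj w₂).im| ≤ ‖w₁ - w₂‖ ^ 2 := by
  rcases (norm_nonneg w₂).eq_or_lt with h₀ | hw₂
  · simp [norm_eq_zero.mp h₀.symm]
  have hlog_nonneg : 0 ≤ Real.log ‖w₁‖ - Real.log ‖w₂‖ :=
    sub_nonneg.mpr (Real.log_le_log hw₂ h)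
  calc |(Real.log ‖w₁‖ - Real.log ‖w₂‖) * (w₁ * conj w₂).im|
      = (Real.log ‖w₁‖ - Real.log ‖w₂‖) * |(w₁ * conj w₂).im| := by
        rw [abs_mul, abs_of_nonneg hlog_nonneg]
    _ ≤ (‖w₁‖ - ‖w₂‖) / ‖w₂‖ * (‖w₁ - w₂‖ * ‖w₂‖) :=
        mul_le_mul (Real.log_sub_log_le_div (hw₂.trans_le h) hw₂) (abs_im_mul_conj_le w₁ w₂)
          (abs_nonneg _) (div_nonneg (sub_nonneg.mpr h) hw₂.le)
    _ = (‖w₁‖ - ‖w₂‖) * ‖w₁ - w₂‖ := by field_simp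
    _ ≤ ‖w₁ - w₂‖ * ‖w₁ - w₂‖ :=
        mul_le_mul_of_nonneg_right (norm_sub_norm_le w₁ w₂) (norm_nonneg _)
    _ = ‖w₁ - w₂‖ ^ 2 := (sq _).symm

theorem abs_log_norm_sub_mul_im_mul_conj_le (w₁ w₂ : ℂ) :
    |(Real.log ‖w₁‖ - Real.log ‖w₂‖) * (w₁ * conj w₂).im| ≤ ‖w₁ - w₂‖ ^ 2 := by
  wlog h : ‖w₂‖ ≤ ‖w₁‖ generalizing w₁ w₂
  · have hswap := this w₂ w₁ (le_of_not_ge h)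
    have him : (w₂ * conj w₁).im = -(w₁ * conj w₂).im := by
      rw [← conj_im, map_mul, conj_conj, mul_comm w₂]
    rwa [him, mul_neg, ← neg_mul, neg_sub, norm_sub_rev] at hswap
  exact abs_log_norm_sub_mul_im_mul_conj_le_of_norm_le h

end Complex

/-- Lemma (Cazenave–Haraux): for all complex `z1, z2` (with the convention
`0 · ln 0 = 0`, automatic since `Real.log 0 = 0`),
`|Im((z1 ln|z1|² − z2 ln|z2|²)(conj z1 − conj z2))| ≤ 2|z1 − z2|²`. -/
theorem stmt0 (z1 z2 : ℂ) :
    |(((z1 * (Real.log (‖z1‖ ^ 2) : ℝ) -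
        z2 * (Real.log (‖z2‖ ^ 2) : ℝ)) *
        ((starRingEnd ℂ) z1 - (starRingEnd ℂ) z2)).im)| ≤
      2 * ‖z1 - z2‖ ^ 2 := by
  rw [im_mul_real_sub_mul_real_mul_conj_sub, Real.log_pow, Real.log_pow, ← mul_sub,
    mul_assoc, abs_mul, Nat.cast_ofNat, abs_two, ← neg_sub, neg_mul, abs_neg]
  gcongr
  exact abs_log_norm_sub_mul_im_mul_conj_le z1 z2
end

section
/- Let n ≥ 2 be an integer and 0 < ε ≤ 1. Define q_n^ε(ρ) = ln(ε²) − ((n+1)/n)(1 − ρ/ε²)^n − Σ_{k=1}^{n−1} (1/k)(1 − ρ/ε²)^k for ρ ∈ [0, ε²]. Then for all ρ ∈ [0, ε²], |q_n^ε(ρ)| ≤ 2 + ln(n·ε^{−2}). -/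
/-
With `t = 1 − ρ/ε² ∈ [0, 1]` one has `q_n^ε(ρ) = ln ε² − A`, where
`A = ((n+1)/n) tⁿ + Σ_{k<n} tᵏ/k = tⁿ + Σ_{k≤n} tᵏ/k` lies in `[0, 1 + H_n] ⊆ [0, 2 + ln n]`.
Since `ln ε² ≤ 0 ≤ ln n`, both `q_n^ε ≤ 0` and `−q_n^ε ≤ 2 + ln n − ln ε²` follow.
-/

open Real

/-- `q_n^ε = (P_{n+1}^ε)'`, the derivative of the local polynomial regularization of
`F(ρ) = ρ ln ρ − ρ` on `[0, ε²]`. -/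
noncomputable def qfun (n : ℕ) (ε ρ : ℝ) : ℝ :=
  Real.log (ε ^ 2) - ((n + 1 : ℝ) / n) * (1 - ρ / ε ^ 2) ^ n
    - ∑ k ∈ Finset.Icc 1 (n - 1), (1 / (k : ℝ)) * (1 - ρ / ε ^ 2) ^ k

open Finset

theorem sum_Icc_inv_le_one_add_log (n : ℕ) : ∑ k ∈ Icc 1 n, (k : ℝ)⁻¹ ≤ 1 + log n := by
  simpa only [harmonic_eq_sum_Icc, Rat.cast_sum, Rat.cast_inv, Rat.cast_natCast] using
    harmonic_le_one_add_log n

noncomputable def qfunPoly (n : ℕ) (t : ℝ) : ℝ :=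
  ((n + 1 : ℝ) / n) * t ^ n + ∑ k ∈ Icc 1 (n - 1), (1 / (k : ℝ)) * t ^ k

theorem qfun_eq_log_sub_qfunPoly (n : ℕ) (ε ρ : ℝ) :
    qfun n ε ρ = log (ε ^ 2) - qfunPoly n (1 - ρ / ε ^ 2) :=
  sub_sub _ _ _

theorem qfunPoly_nonneg (n : ℕ) {t : ℝ} (ht : 0 ≤ t) : 0 ≤ qfunPoly n t := by
  unfold qfunPoly; positivity

theorem qfunPoly_eq_pow_add_sum {n : ℕ} (hn : 1 ≤ n) (t : ℝ) :
    qfunPoly n t = t ^ n + ∑ k ∈ Icc 1 n, (1 / (k : ℝ)) * t ^ k := by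
  obtain ⟨m, rfl⟩ := Nat.exists_eq_add_of_le' hn
  have hm : ((m : ℝ) + 1) ≠ 0 := by positivity
  rw [qfunPoly, Nat.add_sub_cancel, sum_Icc_succ_top (by omega)]
  push_cast
  field_simp
  ring

theorem qfunPoly_le_two_add_log {n : ℕ} (hn : 1 ≤ n) {t : ℝ} (ht0 : 0 ≤ t) (ht1 : t ≤ 1) :
    qfunPoly n t ≤ 2 + log n := by
  have hpow : ∀ k : ℕ, t ^ k ≤ 1 := fun k => pow_le_one₀ ht0 ht1
  have hsum : ∑ k ∈ Icc 1 n, (1 / (k : ℝ)) * t ^ k ≤ ∑ k ∈ Icc 1 n, (k : ℝ)⁻¹ :=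
    sum_le_sum fun k _ => by
      rw [one_div]; exact mul_le_of_le_one_right (by positivity) (hpow k)
  rw [qfunPoly_eq_pow_add_sum hn]
  linarith [hpow n, sum_Icc_inv_le_one_add_log n]

/-- For `n ≥ 2`, `0 < ε ≤ 1` and `ρ ∈ [0, ε²]`, `|q_n^ε(ρ)| ≤ 2 + ln(n ε⁻²)`. -/
theorem stmt3 (n : ℕ) (hn : 2 ≤ n) (ε : ℝ) (hε : 0 < ε) (hε1 : ε ≤ 1) :
    ∀ ρ ∈ Set.Icc (0 : ℝ) (ε ^ 2),
      |qfun n ε ρ| ≤ 2 + Real.log ((n : ℝ) * ε⁻¹ ^ 2) := by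
  rintro ρ ⟨hρ0, hρ1⟩
  have hε2 : 0 < ε ^ 2 := by positivity
  have ht0 : 0 ≤ 1 - ρ / ε ^ 2 := sub_nonneg.mpr ((div_le_one hε2).mpr hρ1)
  have ht1 : 1 - ρ / ε ^ 2 ≤ 1 := sub_le_self _ (div_nonneg hρ0 hε2.le)
  have hlog_ε : log (ε ^ 2) ≤ 0 := log_nonpos hε2.le (pow_le_one₀ hε.le hε1)
  have hlog_n : 0 ≤ log n := log_natCast_nonneg n
  have hrhs : log (n * ε⁻¹ ^ 2) = log n - log (ε ^ 2) := by
    rw [inv_pow, ← div_eq_mul_inv, log_div (by positivity) hε2.ne']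
  rw [qfun_eq_log_sub_qfunPoly, hrhs, abs_le]
  constructor <;>
    linarith [qfunPoly_nonneg n ht0, qfunPoly_le_two_add_log (by omega : 1 ≤ n) ht0 ht1]
end

section
/- Let n ≥ 2 be an integer, ε > 0, and define f_n^ε(ρ) = ln ρ for ρ ≥ ε², and f_n^ε(ρ) = q_n^ε(ρ) = ln(ε²) − ((n+1)/n)(1 − ρ/ε²)^n − Σ_{k=1}^{n−1}(1/k)(1 − ρ/ε²)^k for 0 ≤ ρ < ε². Then for all z1, z2 ∈ ℂ with |z1|, |z2| ≤ ε, one has |f_n^ε(|z1|²) − f_n^ε(|z2|²)| ≤ (4n/ε)·|z1 − z2|. -/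
/-!
On the disc of radius `ε` only the polynomial branch matters, since both branches of `f_n^ε`
equal `log ε²` at `ρ = ε²`. In the variable `u = 1 - ρ / ε² ∈ [0, 1]` that branch is `log ε²`
minus a polynomial `∑ c_k u^k` with `c_k ≥ 0` and `∑ k c_k = (n + 1) + (n - 1) = 2n`; as
`|u^k - v^k| ≤ k |u - v|` on `[-1, 1]`, it is `2n/ε²`-Lipschitz in `ρ`. Finally
`|‖z₁‖² - ‖z₂‖²| ≤ 2ε ‖z₁ - z₂‖` on the disc.
-/

open Real Complex

/-- The locally regularized logarithm `f_n^ε` of the LER construction: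
`f_n^ε(ρ) = ln ρ` for `ρ ≥ ε²`, and `f_n^ε(ρ) = q_n^ε(ρ)` for `0 ≤ ρ < ε²`. -/
noncomputable def freg (n : ℕ) (ε ρ : ℝ) : ℝ :=
  if ε ^ 2 ≤ ρ then Real.log ρ else qfun n ε ρ

theorem abs_pow_sub_pow_le_of_abs_le_one {x y : ℝ} (hx : |x| ≤ 1) (hy : |y| ≤ 1) (k : ℕ) :
    |x ^ k - y ^ k| ≤ k * |x - y| :=
  calc |x ^ k - y ^ k| ≤ |x - y| * k * max |x| |y| ^ (k - 1) :=
        abs_pow_sub_pow_le x y k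
    _ ≤ |x - y| * k * 1 := by gcongr; exact pow_le_one₀ (by positivity) (max_le hx hy)
    _ = k * |x - y| := by ring

theorem abs_smul_pow_sub_smul_pow_le {c x y : ℝ} (hc : 0 ≤ c) (hx : |x| ≤ 1) (hy : |y| ≤ 1)
    (k : ℕ) : |c * x ^ k - c * y ^ k| ≤ c * k * |x - y| := by
  rw [← mul_sub, abs_mul, abs_of_nonneg hc, mul_assoc]
  gcongr
  exact abs_pow_sub_pow_le_of_abs_le_one hx hy k

noncomputable def regPoly (n : ℕ) (u : ℝ) : ℝ :=
  ((n + 1 : ℝ) / n) * u ^ n + ∑ k ∈ Finset.Icc 1 (n - 1), (1 / (k : ℝ)) * u ^ k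

theorem qfun_eq_log_sub_regPoly (n : ℕ) (ε ρ : ℝ) :
    qfun n ε ρ = Real.log (ε ^ 2) - regPoly n (1 - ρ / ε ^ 2) := by
  rw [qfun, regPoly]; ring

theorem abs_regPoly_sub_le {n : ℕ} (hn : 1 ≤ n) {u v : ℝ} (hu : |u| ≤ 1) (hv : |v| ≤ 1) :
    |regPoly n u - regPoly n v| ≤ 2 * n * |u - v| := by
  have hlead : |(n + 1 : ℝ) / n * u ^ n - (n + 1 : ℝ) / n * v ^ n| ≤ (n + 1) * |u - v| := by
    refine (abs_smul_pow_sub_smul_pow_le (by positivity) hu hv n).trans_eq ?_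
    field_simp
  have hsum : |∑ k ∈ Finset.Icc 1 (n - 1), (1 / (k : ℝ)) * u ^ k
      - ∑ k ∈ Finset.Icc 1 (n - 1), (1 / (k : ℝ)) * v ^ k| ≤ (n - 1) * |u - v| := by
    rw [← Finset.sum_sub_distrib]
    calc _ ≤ ∑ k ∈ Finset.Icc 1 (n - 1), |(1 / (k : ℝ)) * u ^ k - (1 / (k : ℝ)) * v ^ k| :=
          Finset.abs_sum_le_sum_abs _ _
      _ ≤ ∑ _k ∈ Finset.Icc 1 (n - 1), |u - v| := by
          refine Finset.sum_le_sum fun k hk => ?_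
          have hk : (k : ℝ) ≠ 0 := Nat.cast_ne_zero.mpr (by grind)
          refine (abs_smul_pow_sub_smul_pow_le (by positivity) hu hv k).trans_eq ?_
          field_simp
      _ = (n - 1) * |u - v| := by
          rw [Finset.sum_const, Nat.card_Icc, nsmul_eq_mul, Nat.add_sub_cancel,
            Nat.cast_sub hn, Nat.cast_one]
  calc |regPoly n u - regPoly n v|
      ≤ |(n + 1 : ℝ) / n * u ^ n - (n + 1 : ℝ) / n * v ^ n|
        + |∑ k ∈ Finset.Icc 1 (n - 1), (1 / (k : ℝ)) * u ^ k
          - ∑ k ∈ Finset.Icc 1 (n - 1), (1 / (k : ℝ)) * v ^ k| := by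
        rw [regPoly, regPoly, add_sub_add_comm]; exact abs_add_le _ _
    _ ≤ 2 * n * |u - v| := by linarith

theorem abs_one_sub_div_le_one {ρ δ : ℝ} (hδ : 0 < δ) (hρ₀ : 0 ≤ ρ) (hρ : ρ ≤ δ) :
    |1 - ρ / δ| ≤ 1 := by
  have : ρ / δ ≤ 1 := div_le_one_of_le₀ hρ hδ.le
  rw [abs_le]; constructor <;> linarith [div_nonneg hρ₀ hδ.le]

theorem abs_qfun_sub_le {n : ℕ} (hn : 1 ≤ n) {ε a b : ℝ} (hε : 0 < ε)
    (ha₀ : 0 ≤ a) (ha : a ≤ ε ^ 2) (hb₀ : 0 ≤ b) (hb : b ≤ ε ^ 2) :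
    |qfun n ε a - qfun n ε b| ≤ 2 * n / ε ^ 2 * |a - b| := by
  have hε2 : 0 < ε ^ 2 := by positivity
  rw [qfun_eq_log_sub_regPoly, qfun_eq_log_sub_regPoly, sub_sub_sub_cancel_left, abs_sub_comm]
  calc _ ≤ 2 * (n : ℝ) * |(1 - a / ε ^ 2) - (1 - b / ε ^ 2)| :=
        abs_regPoly_sub_le hn (abs_one_sub_div_le_one hε2 ha₀ ha)
          (abs_one_sub_div_le_one hε2 hb₀ hb)
    _ = 2 * n / ε ^ 2 * |a - b| := by
        rw [sub_sub_sub_cancel_left, ← sub_div, abs_div, abs_of_pos hε2, abs_sub_comm]; ring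

theorem regPoly_zero {n : ℕ} (hn : n ≠ 0) : regPoly n 0 = 0 := by
  rw [regPoly, zero_pow hn, mul_zero, zero_add]
  exact Finset.sum_eq_zero fun k hk => by
    rw [zero_pow (Nat.one_le_iff_ne_zero.mp (Finset.mem_Icc.mp hk).1), mul_zero]

theorem freg_eq_qfun {n : ℕ} (hn : n ≠ 0) {ε ρ : ℝ} (hε : 0 < ε) (hρ : ρ ≤ ε ^ 2) :
    freg n ε ρ = qfun n ε ρ := by
  rw [freg]
  split_ifs with h
  · rw [le_antisymm hρ h, qfun_eq_log_sub_regPoly, div_self (by positivity), sub_self,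
      regPoly_zero hn, sub_zero]
  · rfl

theorem abs_norm_sq_sub_norm_sq_le {E : Type*} [SeminormedAddCommGroup E] {x y : E} {r : ℝ}
    (hx : ‖x‖ ≤ r) (hy : ‖y‖ ≤ r) : |‖x‖ ^ 2 - ‖y‖ ^ 2| ≤ 2 * r * ‖x - y‖ :=
  calc |‖x‖ ^ 2 - ‖y‖ ^ 2| = (‖x‖ + ‖y‖) * |‖x‖ - ‖y‖| := by
        rw [sq_sub_sq, abs_mul, abs_of_nonneg (by positivity)]
    _ ≤ 2 * r * ‖x - y‖ :=
        mul_le_mul (by linarith) (abs_norm_sub_norm_le x y) (abs_nonneg _)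
          (by linarith [norm_nonneg x])

/-- For `n ≥ 2`, `ε > 0` and `|z1|, |z2| ≤ ε`,
`|f_n^ε(|z1|²) − f_n^ε(|z2|²)| ≤ (4n/ε)|z1 − z2|`. -/
theorem stmt4 (n : ℕ) (hn : 2 ≤ n) (ε : ℝ) (hε : 0 < ε) (z1 z2 : ℂ)
    (h1 : ‖z1‖ ≤ ε) (h2 : ‖z2‖ ≤ ε) :
    |freg n ε (‖z1‖ ^ 2) - freg n ε (‖z2‖ ^ 2)| ≤
      (4 * n / ε) * ‖z1 - z2‖ := by
  have hsq1 : ‖z1‖ ^ 2 ≤ ε ^ 2 := by gcongr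
  have hsq2 : ‖z2‖ ^ 2 ≤ ε ^ 2 := by gcongr
  rw [freg_eq_qfun (by omega) hε hsq1, freg_eq_qfun (by omega) hε hsq2]
  calc _ ≤ 2 * n / ε ^ 2 * |‖z1‖ ^ 2 - ‖z2‖ ^ 2| :=
        abs_qfun_sub_le (by omega) hε (by positivity) hsq1 (by positivity) hsq2
    _ ≤ 2 * n / ε ^ 2 * (2 * ε * ‖z1 - z2‖) := by gcongr; exact abs_norm_sq_sub_norm_sq_le h1 h2
    _ = 4 * n / ε * ‖z1 - z2‖ := by field_simp; ring
end

section
/- Let n ≥ 2 be an integer, ε > 0, and f_n^ε the locally regularized logarithm as in the LER construction. Then for all z1, z2 ∈ ℂ, |Im((z1·f_n^ε(|z1|²) − z2·f_n^ε(|z2|²))·(conj(z1) − conj(z2)))| ≤ 4n·|z1 − z2|². -/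
open Real Complex

/-!
With `φ r = f_n^ε(r²)` one has
`Im((z φ|z| − w φ|w|)(conj z − conj w)) = Im(conj z · w) (φ|z| − φ|w|)` and
`|Im(conj z · w)| ≤ min(|z|, |w|) |z − w|`, so it suffices that
`|φ r − φ s| ≤ 4n (r − s) / max(ε, s)` for `0 ≤ s ≤ r`. On `[ε, ∞)` this is the
Lipschitz bound `2/s` of `2 log`; on `[0, ε]` it follows from `|aᵏ − bᵏ| ≤ k |a − b|`
on `[0, 1]` applied to each monomial of `q_n^ε`; and for `s < ε < r` the two pieces are
glued at `ε`, where they agree.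
-/

open ComplexConjugate

section RegularizedLog

variable {n : ℕ} {ε : ℝ}

lemma abs_pow_sub_pow_le_of_mem_Icc {a b : ℝ} (ha : a ∈ Set.Icc (0 : ℝ) 1)
    (hb : b ∈ Set.Icc (0 : ℝ) 1) (k : ℕ) : |a ^ k - b ^ k| ≤ k * |a - b| := by
  have hmax : max |a| |b| ^ (k - 1) ≤ 1 := by
    rw [abs_of_nonneg ha.1, abs_of_nonneg hb.1]
    exact pow_le_one₀ (le_max_of_le_left ha.1) (max_le ha.2 hb.2)
  calc |a ^ k - b ^ k| ≤ |a - b| * k * max |a| |b| ^ (k - 1) := abs_pow_sub_pow_le ..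
    _ ≤ |a - b| * k * 1 := by gcongr
    _ = k * |a - b| := by ring

lemma abs_sum_inv_mul_pow_sub_pow_le {a b : ℝ} (ha : a ∈ Set.Icc (0 : ℝ) 1)
    (hb : b ∈ Set.Icc (0 : ℝ) 1) (m : ℕ) :
    |∑ k ∈ Finset.Icc 1 m, 1 / (k : ℝ) * (a ^ k - b ^ k)| ≤ m * |a - b| := by
  calc |∑ k ∈ Finset.Icc 1 m, 1 / (k : ℝ) * (a ^ k - b ^ k)|
      ≤ ∑ k ∈ Finset.Icc 1 m, |1 / (k : ℝ) * (a ^ k - b ^ k)| :=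
        Finset.abs_sum_le_sum_abs _ _
    _ ≤ (Finset.Icc 1 m).card • |a - b| := by
        refine Finset.sum_le_card_nsmul _ _ _ fun k hk => ?_
        have hk : (0 : ℝ) < k := by exact_mod_cast (Finset.mem_Icc.mp hk).1
        rw [abs_mul, abs_of_pos (by positivity)]
        calc 1 / (k : ℝ) * |a ^ k - b ^ k| ≤ 1 / k * (k * |a - b|) := by
              gcongr; exact abs_pow_sub_pow_le_of_mem_Icc ha hb k
          _ = |a - b| := by field_simp
    _ = m * |a - b| := by rw [Nat.card_Icc, nsmul_eq_mul, Nat.add_sub_cancel]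

lemma abs_qfun_sub_qfun_le (hn : n ≠ 0) (hε : 0 < ε) {ρ₁ ρ₂ : ℝ}
    (h₁ : ρ₁ ∈ Set.Icc 0 (ε ^ 2)) (h₂ : ρ₂ ∈ Set.Icc 0 (ε ^ 2)) :
    |qfun n ε ρ₁ - qfun n ε ρ₂| ≤ 2 * n / ε ^ 2 * |ρ₁ - ρ₂| := by
  have hε2 : 0 < ε ^ 2 := by positivity
  have mem : ∀ ρ ∈ Set.Icc 0 (ε ^ 2), 1 - ρ / ε ^ 2 ∈ Set.Icc (0 : ℝ) 1 := fun ρ hρ =>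
    ⟨by rw [sub_nonneg, div_le_one hε2]; exact hρ.2, by linarith [div_nonneg hρ.1 hε2.le]⟩
  have hq : qfun n ε ρ₁ - qfun n ε ρ₂
      = (n + 1 : ℝ) / n * ((1 - ρ₂ / ε ^ 2) ^ n - (1 - ρ₁ / ε ^ 2) ^ n)
        + ∑ k ∈ Finset.Icc 1 (n - 1),
            1 / (k : ℝ) * ((1 - ρ₂ / ε ^ 2) ^ k - (1 - ρ₁ / ε ^ 2) ^ k) := by
    simp only [qfun, mul_sub, Finset.sum_sub_distrib]; ring
  set a := 1 - ρ₁ / ε ^ 2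
  set b := 1 - ρ₂ / ε ^ 2
  have hba : |b - a| = |ρ₁ - ρ₂| / ε ^ 2 := by
    rw [show b - a = (ρ₁ - ρ₂) / ε ^ 2 by ring, abs_div, abs_of_pos hε2]
  have lead : |(n + 1 : ℝ) / n * (b ^ n - a ^ n)| ≤ (n + 1) * |b - a| := by
    have hn' : (0 : ℝ) < n := by positivity
    rw [abs_mul, abs_of_pos (by positivity)]
    calc (n + 1 : ℝ) / n * |b ^ n - a ^ n| ≤ (n + 1) / n * (n * |b - a|) := by
          gcongr; exact abs_pow_sub_pow_le_of_mem_Icc (mem _ h₂) (mem _ h₁) n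
      _ = (n + 1) * |b - a| := by field_simp
  calc |qfun n ε ρ₁ - qfun n ε ρ₂|
      ≤ (n + 1) * |b - a| + (n - 1 : ℕ) * |b - a| :=
        hq ▸ (abs_add_le _ _).trans
          (add_le_add lead (abs_sum_inv_mul_pow_sub_pow_le (mem _ h₂) (mem _ h₁) _))
    _ = 2 * n / ε ^ 2 * |ρ₁ - ρ₂| := by rw [hba, Nat.cast_pred (by omega)]; ring

lemma qfun_sq_self (hn : n ≠ 0) (hε : ε ≠ 0) : qfun n ε (ε ^ 2) = Real.log (ε ^ 2) := by
  rw [qfun, div_self (pow_ne_zero 2 hε), sub_self, zero_pow hn, mul_zero, sub_zero,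
    Finset.sum_eq_zero fun k hk => ?_, sub_zero]
  rw [zero_pow (Nat.one_le_iff_ne_zero.1 (Finset.mem_Icc.1 hk).1), mul_zero]

lemma freg_of_le (hn : n ≠ 0) (hε : ε ≠ 0) {ρ : ℝ} (hρ : ρ ≤ ε ^ 2) :
    freg n ε ρ = qfun n ε ρ := by
  rcases hρ.lt_or_eq with h | rfl
  · exact if_neg h.not_ge
  · rw [freg, if_pos le_rfl, qfun_sq_self hn hε]

lemma freg_of_ge {ρ : ℝ} (hρ : ε ^ 2 ≤ ρ) : freg n ε ρ = Real.log ρ := if_pos hρ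

lemma abs_freg_sq_sub_le_of_le (hn : n ≠ 0) (hε : 0 < ε) {s r : ℝ} (hs : 0 ≤ s)
    (hsr : s ≤ r) (hr : r ≤ ε) :
    |freg n ε (r ^ 2) - freg n ε (s ^ 2)| ≤ 4 * n * (r - s) / ε := by
  have hr2 : r ^ 2 ≤ ε ^ 2 := by gcongr; linarith
  have hs2 : s ^ 2 ≤ r ^ 2 := by gcongr
  rw [freg_of_le hn hε.ne' hr2, freg_of_le hn hε.ne' (hs2.trans hr2)]
  calc |qfun n ε (r ^ 2) - qfun n ε (s ^ 2)| ≤ 2 * n / ε ^ 2 * |r ^ 2 - s ^ 2| :=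
        abs_qfun_sub_qfun_le hn hε ⟨by positivity, hr2⟩ ⟨by positivity, hs2.trans hr2⟩
    _ = 2 * n / ε ^ 2 * ((r + s) * (r - s)) := by rw [abs_of_nonneg (by linarith)]; ring
    _ ≤ 2 * n / ε ^ 2 * (2 * ε * (r - s)) := by gcongr; linarith
    _ = 4 * n * (r - s) / ε := by field_simp; ring

lemma abs_freg_sq_sub_le_of_ge (hε : 0 < ε) {s r : ℝ} (hs : ε ≤ s) (hsr : s ≤ r) :
    |freg n ε (r ^ 2) - freg n ε (s ^ 2)| ≤ 2 * (r - s) / s := by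
  have hs0 : 0 < s := hε.trans_le hs
  have hr0 : 0 < r := hs0.trans_le hsr
  rw [freg_of_ge (by gcongr; linarith), freg_of_ge (by gcongr), Real.log_pow, Real.log_pow,
    ← mul_sub, ← Real.log_div (by positivity) hs0.ne', abs_of_nonneg]
  · calc (2 : ℕ) * Real.log (r / s) ≤ 2 * (r / s - 1) := by
          push_cast; gcongr; exact Real.log_le_sub_one_of_pos (by positivity)
      _ = 2 * (r - s) / s := by field_simp
  · exact mul_nonneg (by positivity) (Real.log_nonneg ((one_le_div hs0).2 hsr))

lemma abs_freg_sq_sub_le (hn : n ≠ 0) (hε : 0 < ε) {s r : ℝ} (hs : 0 ≤ s) (hsr : s ≤ r) :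
    |freg n ε (r ^ 2) - freg n ε (s ^ 2)| ≤ 4 * n * (r - s) / max ε s := by
  have hn' : (1 : ℝ) ≤ n := by exact_mod_cast Nat.one_le_iff_ne_zero.2 hn
  rcases le_total ε s with hεs | hsε
  · rw [max_eq_right hεs]
    calc |freg n ε (r ^ 2) - freg n ε (s ^ 2)| ≤ 2 * (r - s) / s :=
          abs_freg_sq_sub_le_of_ge hε hεs hsr
      _ ≤ 4 * n * (r - s) / s := by gcongr; linarith
  rw [max_eq_left hsε]
  rcases le_total r ε with hrε | hεr
  · exact abs_freg_sq_sub_le_of_le hn hε hs hsr hrε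
  calc |freg n ε (r ^ 2) - freg n ε (s ^ 2)|
      ≤ |freg n ε (r ^ 2) - freg n ε (ε ^ 2)| + |freg n ε (ε ^ 2) - freg n ε (s ^ 2)| :=
        abs_sub_le _ _ _
    _ ≤ 2 * (r - ε) / ε + 4 * n * (ε - s) / ε :=
        add_le_add (abs_freg_sq_sub_le_of_ge hε le_rfl hεr)
          (abs_freg_sq_sub_le_of_le hn hε hs hsε le_rfl)
    _ ≤ 4 * n * (r - s) / ε := by rw [← add_div]; gcongr; nlinarith

end RegularizedLog

lemma im_mul_conj_sub_conj (z w : ℂ) (a b : ℝ) :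
    ((z * a - w * b) * (conj z - conj w)).im = (conj z * w).im * (a - b) := by
  simp only [mul_im, mul_re, sub_re, sub_im, conj_re, conj_im, ofReal_re, ofReal_im]
  ring

lemma abs_im_conj_mul_le (z w : ℂ) : |(conj z * w).im| ≤ ‖w‖ * ‖z - w‖ := by
  have h : (conj z * w).im = (conj (z - w) * w).im := by
    simp only [mul_im, sub_re, sub_im, conj_re, conj_im, map_sub]
    ring
  calc |(conj z * w).im| = |(conj (z - w) * w).im| := by rw [h]
    _ ≤ ‖conj (z - w) * w‖ := abs_im_le_norm _
    _ = ‖w‖ * ‖z - w‖ := by rw [norm_mul, norm_conj, mul_comm]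

theorem abs_im_radial_sub_mul_conj_sub_le (φ : ℝ → ℝ) {C : ℝ} (hC : 0 ≤ C)
    (hφ : ∀ s r, 0 ≤ s → s ≤ r → s * |φ r - φ s| ≤ C * (r - s)) (z w : ℂ) :
    |((z * φ ‖z‖ - w * φ ‖w‖) * (conj z - conj w)).im| ≤ C * ‖z - w‖ ^ 2 := by
  wlog h : ‖w‖ ≤ ‖z‖ generalizing z w
  · have swap : (w * φ ‖w‖ - z * φ ‖z‖) * (conj w - conj z)
        = (z * φ ‖z‖ - w * φ ‖w‖) * (conj z - conj w) := by ring
    simpa only [swap, norm_sub_rev] using this w z (le_of_not_ge h)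
  rw [im_mul_conj_sub_conj, abs_mul]
  calc |(conj z * w).im| * |φ ‖z‖ - φ ‖w‖|
      ≤ ‖z - w‖ * (‖w‖ * |φ ‖z‖ - φ ‖w‖|) := by
        rw [mul_left_comm, ← mul_assoc]; gcongr; exact abs_im_conj_mul_le z w
    _ ≤ ‖z - w‖ * (C * ‖z - w‖) := by
        gcongr ‖z - w‖ * ?_
        exact (hφ _ _ (norm_nonneg w) h).trans (by gcongr; exact norm_sub_norm_le z w)
    _ = C * ‖z - w‖ ^ 2 := by ring

/-- For `n ≥ 2`, `ε > 0` and all `z1, z2 ∈ ℂ`,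
`|Im((z1 f_n^ε(|z1|²) − z2 f_n^ε(|z2|²))(conj z1 − conj z2))| ≤ 4n|z1 − z2|²`. -/
theorem stmt6 (n : ℕ) (hn : 2 ≤ n) (ε : ℝ) (hε : 0 < ε) (z1 z2 : ℂ) :
    |(((z1 * (freg n ε (‖z1‖ ^ 2) : ℝ) -
        z2 * (freg n ε (‖z2‖ ^ 2) : ℝ)) *
        ((starRingEnd ℂ) z1 - (starRingEnd ℂ) z2)).im)| ≤
      4 * n * ‖z1 - z2‖ ^ 2 := by
  refine abs_im_radial_sub_mul_conj_sub_le (fun r => freg n ε (r ^ 2)) (by positivity)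
    (fun s r hs hsr => ?_) z1 z2
  have hfrac : s / max ε s ≤ 1 := div_le_one_of_le₀ (le_max_right _ _) (by positivity)
  calc s * |freg n ε (r ^ 2) - freg n ε (s ^ 2)| ≤ s * (4 * n * (r - s) / max ε s) := by
        gcongr; exact abs_freg_sq_sub_le (by omega) hε hs hsr
    _ = s / max ε s * (4 * n * (r - s)) := by ring
    _ ≤ 4 * n * (r - s) := mul_le_of_le_one_left (by positivity) hfrac
end

section
/- Let n ≥ 2 be an integer and ε > 0. With f_n^ε as in the LER construction, the function g(ρ) = ρ·(f_n^ε)'(ρ) satisfies 0 ≤ g(ρ) ≤ 3 for all ρ ≥ 0. -/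
open Real Complex

/-!
Write `u = ρ / ε²`. On `[0, ε²)` the geometric sum in `q_n^ε` telescopes and
`ρ (f_n^ε)'(ρ) = (n + 1) u (1 - u)^(n-1) + 1 - (1 - u)^(n-1)`; Bernoulli's inequality
`(1 - u)^m (1 + m u) ≤ (1 - u²)^m ≤ 1` bounds this by `2 - 2 (1 - u)^n ≤ 2`. On `(ε², ∞)` it is
`ρ · ρ⁻¹ = 1`, and at `ρ = ε²` the two pieces are tangent, so `f_n^ε` is differentiable there
with the same value `1`.
-/

open Finset Filter Topology

lemma sum_Icc_one_comp_pred {M : Type*} [AddCommMonoid M] (f : ℕ → M) (m : ℕ) :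
    ∑ k ∈ Icc 1 m, f (k - 1) = ∑ i ∈ range m, f i := by
  rw [← Ico_add_one_right_eq_Icc, sum_Ico_eq_sum_range]
  simp

lemma qfun_hasDerivAt {n : ℕ} (hn : n ≠ 0) (ε ρ : ℝ) :
    HasDerivAt (qfun n ε)
      (((n + 1) * (1 - ρ / ε ^ 2) ^ (n - 1) + ∑ i ∈ range (n - 1), (1 - ρ / ε ^ 2) ^ i) / ε ^ 2)
      ρ := by
  have hbase : HasDerivAt (fun x : ℝ => 1 - x / ε ^ 2) (-(1 / ε ^ 2)) ρ := by
    simpa using ((hasDerivAt_id ρ).div_const (ε ^ 2)).const_sub 1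
  have hpow (k : ℕ) : HasDerivAt (fun x : ℝ => (1 - x / ε ^ 2) ^ k)
      (k * (1 - ρ / ε ^ 2) ^ (k - 1) * -(1 / ε ^ 2)) ρ := hbase.pow k
  have hq := (((hpow n).const_mul ((n + 1 : ℝ) / n)).const_sub (Real.log (ε ^ 2))).sub
    (HasDerivAt.fun_sum fun k (_ : k ∈ Icc 1 (n - 1)) => (hpow k).const_mul (1 / (k : ℝ)))
  refine hq.congr_deriv ?_
  have hterm : ∀ k ∈ Icc 1 (n - 1),
      1 / (k : ℝ) * (k * (1 - ρ / ε ^ 2) ^ (k - 1) * -(1 / ε ^ 2))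
        = -((1 - ρ / ε ^ 2) ^ (k - 1) / ε ^ 2) := by
    intro k hk
    have hk : (k : ℝ) ≠ 0 := Nat.cast_ne_zero.mpr (by grind)
    field_simp
  rw [sum_congr rfl hterm, sum_neg_distrib, ← sum_div,
    sum_Icc_one_comp_pred (fun i => (1 - ρ / ε ^ 2) ^ i)]
  have hn : (n : ℝ) ≠ 0 := Nat.cast_ne_zero.mpr hn
  field_simp
  ring

lemma qfun_sq {n : ℕ} (hn : n ≠ 0) {ε : ℝ} (hε : ε ≠ 0) : qfun n ε (ε ^ 2) = Real.log (ε ^ 2) := by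
  have hzero : ∀ k ∈ Icc 1 (n - 1), 1 / (k : ℝ) * 0 ^ k = 0 := fun k hk => by
    rw [zero_pow (by grind), mul_zero]
  simp only [qfun, div_self (pow_ne_zero 2 hε), sub_self, zero_pow hn, sum_eq_zero hzero]
  ring

lemma freg_eventuallyEq_qfun {n : ℕ} {ε ρ : ℝ} (hρ : ρ < ε ^ 2) : freg n ε =ᶠ[𝓝 ρ] qfun n ε := by
  filter_upwards [Iio_mem_nhds hρ] with x hx
  exact if_neg (not_le.mpr hx)

lemma freg_eventuallyEq_log {n : ℕ} {ε ρ : ℝ} (hρ : ε ^ 2 < ρ) : freg n ε =ᶠ[𝓝 ρ] Real.log := by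
  filter_upwards [Ioi_mem_nhds hρ] with x hx
  exact if_pos hx.le

lemma freg_eq_qfun_of_le {n : ℕ} (hn : n ≠ 0) {ε ρ : ℝ} (hε : ε ≠ 0) (hρ : ρ ≤ ε ^ 2) :
    freg n ε ρ = qfun n ε ρ := by
  rcases hρ.lt_or_eq with hlt | rfl
  · exact if_neg hlt.not_ge
  · exact (if_pos le_rfl).trans (qfun_sq hn hε).symm

lemma freg_hasDerivAt_sq {n : ℕ} (hn : 2 ≤ n) {ε : ℝ} (hε : ε ≠ 0) :
    HasDerivAt (freg n ε) (ε ^ 2)⁻¹ (ε ^ 2) := by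
  have hε2 : ε ^ 2 ≠ 0 := pow_ne_zero 2 hε
  have hright : HasDerivWithinAt (freg n ε) (ε ^ 2)⁻¹ (Set.Ici (ε ^ 2)) (ε ^ 2) :=
    (Real.hasDerivAt_log hε2).hasDerivWithinAt.congr (fun y hy => if_pos hy) (if_pos le_rfl)
  have hleft : HasDerivWithinAt (freg n ε) (ε ^ 2)⁻¹ (Set.Iic (ε ^ 2)) (ε ^ 2) := by
    have hq := (qfun_hasDerivAt (by omega : n ≠ 0) ε (ε ^ 2)).hasDerivWithinAt (s := Set.Iic (ε ^ 2))
    simp only [div_self hε2, sub_self, zero_pow (by omega : n - 1 ≠ 0), zero_geom_sum,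
      if_neg (by omega : n - 1 ≠ 0), mul_zero, zero_add, one_div] at hq
    exact hq.congr (fun y hy => freg_eq_qfun_of_le (by omega) hε hy)
      (freg_eq_qfun_of_le (by omega) hε le_rfl)
  simpa [Set.Iic_union_Ici] using hleft.union hright

lemma one_sub_pow_mul_one_add_mul_le_one (m : ℕ) {s : ℝ} (h0 : 0 ≤ s) (h1 : s ≤ 1) :
    (1 - s) ^ m * (1 + m * s) ≤ 1 :=
  calc (1 - s) ^ m * (1 + m * s) ≤ (1 - s) ^ m * (1 + s) ^ m :=
        mul_le_mul_of_nonneg_left (one_add_mul_le_pow (by linarith) m) (pow_nonneg (by linarith) m)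
    _ = (1 - s ^ 2) ^ m := by rw [← mul_pow]; ring
    _ ≤ 1 := pow_le_one₀ (by nlinarith) (by nlinarith)

lemma mul_deriv_qfun_mem_Icc (n : ℕ) {u : ℝ} (h0 : 0 ≤ u) (h1 : u ≤ 1) :
    u * ((n + 1) * (1 - u) ^ (n - 1) + ∑ i ∈ range (n - 1), (1 - u) ^ i) ∈ Set.Icc 0 2 := by
  have hgeom : u * ∑ i ∈ range (n - 1), (1 - u) ^ i = 1 - (1 - u) ^ (n - 1) := by
    simpa using mul_neg_geom_sum (1 - u) (n - 1)
  have hbern := one_sub_pow_mul_one_add_mul_le_one (n - 1) h0 h1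
  have hcoef : (n : ℝ) + 1 ≤ ((n - 1 : ℕ) : ℝ) + 2 := by exact_mod_cast (by omega : n + 1 ≤ n - 1 + 2)
  set P := (1 - u) ^ (n - 1)
  have hP0 : 0 ≤ P := pow_nonneg (by linarith) _
  have hP1 : P ≤ 1 := pow_le_one₀ (by linarith) (by linarith)
  rw [mul_add, hgeom]
  constructor <;> nlinarith [mul_nonneg h0 hP0, mul_nonneg (mul_nonneg h0 hP0) (sub_nonneg.2 h1)]

/-- For `n ≥ 2`, `ε > 0`, the function `g(ρ) = ρ (f_n^ε)'(ρ)` satisfies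
`0 ≤ g(ρ) ≤ 3` for all `ρ ≥ 0`. -/
theorem stmt7 (n : ℕ) (hn : 2 ≤ n) (ε : ℝ) (hε : 0 < ε) :
    ∀ ρ : ℝ, 0 ≤ ρ →
      0 ≤ ρ * deriv (freg n ε) ρ ∧ ρ * deriv (freg n ε) ρ ≤ 3 := by
  intro ρ hρ
  have hε2 : 0 < ε ^ 2 := by positivity
  rcases lt_trichotomy ρ (ε ^ 2) with hlt | rfl | hgt
  · have hu := mul_deriv_qfun_mem_Icc n (div_nonneg hρ hε2.le) ((div_le_one hε2).2 hlt.le)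
    rw [(freg_eventuallyEq_qfun hlt).deriv_eq, (qfun_hasDerivAt (by omega) ε ρ).deriv,
      mul_div_left_comm, mul_comm]
    exact ⟨hu.1, hu.2.trans (by norm_num)⟩
  · rw [(freg_hasDerivAt_sq hn hε.ne').deriv, mul_inv_cancel₀ hε2.ne']
    norm_num
  · rw [(freg_eventuallyEq_log hgt).deriv_eq, Real.deriv_log, mul_inv_cancel₀ (hε2.trans hgt).ne']
    norm_num
end

section
/- Let n ≥ 3 be an integer and ε > 0. With f_n^ε as in the LER construction, for all ρ ≥ 0 with ρ ≠ ε², one has ρ^{3/2}·|(f_n^ε)''(ρ)| ≤ 3n²/(2ε). -/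
open Real Complex

/-!
Away from `ρ = ε²`, `f_n^ε` is either `log`, where `ρ^{3/2} |log''(ρ)| = ρ^{-1/2} ≤ 1/ε`, or
`log ε² - P(1 - ρ/ε²)` for a polynomial `P` with nonnegative coefficients. In the second
case `(f_n^ε)''(ρ) = -P''(u)/ε⁴` with `u = 1 - ρ/ε² ∈ [0, 1]`, so
`|P''(u)| ≤ P''(1) = 3n(n-1)/2`, while `ρ^{3/2} ≤ ε³`.
-/

open Filter Topology Finset

theorem deriv_deriv_comp_one_sub_div {Q Q' Q'' : ℝ → ℝ} (hQ : ∀ u, HasDerivAt Q (Q' u) u)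
    (hQ' : ∀ u, HasDerivAt Q' (Q'' u) u) (a c x : ℝ) :
    deriv (deriv fun x => a - Q (1 - x / c)) x = -(Q'' (1 - x / c) / c ^ 2) := by
  have hu (x : ℝ) : HasDerivAt (fun x => 1 - x / c) (-c⁻¹) x := by
    simpa [div_eq_mul_inv] using ((hasDerivAt_id x).div_const c).const_sub 1
  have h1 : deriv (fun x => a - Q (1 - x / c)) = fun x => Q' (1 - x / c) / c := by
    ext x
    exact (((hQ _).comp x (hu x)).const_sub a).deriv.trans (by ring)
  rw [h1]
  exact (((hQ' _).comp x (hu x)).div_const c).deriv.trans (by ring)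

noncomputable def qpoly (n : ℕ) (u : ℝ) : ℝ :=
  (n + 1 : ℝ) / n * u ^ n + ∑ k ∈ Icc 1 (n - 1), 1 / (k : ℝ) * u ^ k

noncomputable def qpolyDeriv (n : ℕ) (u : ℝ) : ℝ :=
  (n + 1 : ℝ) * u ^ (n - 1) + ∑ k ∈ Icc 1 (n - 1), u ^ (k - 1)

noncomputable def qpolyDeriv2 (n : ℕ) (u : ℝ) : ℝ :=
  (n + 1 : ℝ) * ((n - 1 : ℕ) * u ^ (n - 1 - 1))
    + ∑ k ∈ Icc 1 (n - 1), (k - 1 : ℕ) * u ^ (k - 1 - 1)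

theorem qfun_eq_log_sub_qpoly (n : ℕ) (ε : ℝ) :
    qfun n ε = fun ρ => Real.log (ε ^ 2) - qpoly n (1 - ρ / ε ^ 2) := by
  ext ρ
  rw [qfun, qpoly]
  ring

theorem hasDerivAt_qpoly {n : ℕ} (hn : n ≠ 0) (u : ℝ) :
    HasDerivAt (qpoly n) (qpolyDeriv n u) u := by
  have hsum := HasDerivAt.fun_sum (u := Icc 1 (n - 1))
    fun k _ => (hasDerivAt_pow k u).const_mul (1 / (k : ℝ))
  refine (((hasDerivAt_pow n u).const_mul ((n + 1 : ℝ) / n)).fun_add hsum).congr_deriv ?_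
  rw [qpolyDeriv]
  congr 1
  · field_simp
  · refine sum_congr rfl fun k hk => ?_
    have : (k : ℝ) ≠ 0 := by have := (mem_Icc.mp hk).1; positivity
    field_simp

theorem hasDerivAt_qpolyDeriv (n : ℕ) (u : ℝ) :
    HasDerivAt (qpolyDeriv n) (qpolyDeriv2 n u) u :=
  ((hasDerivAt_pow _ u).const_mul _).fun_add (HasDerivAt.fun_sum fun _ _ => hasDerivAt_pow _ u)

theorem sum_Icc_one_natCast_sub_one (m : ℕ) :
    ∑ k ∈ Icc 1 m, ((k - 1 : ℕ) : ℝ) = m * (m - 1) / 2 := by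
  induction m with
  | zero => simp
  | succ m ih =>
    rw [sum_Icc_succ_top (by omega), ih]
    push_cast
    ring

theorem qpolyDeriv2_one (n : ℕ) : qpolyDeriv2 n 1 = 3 * n * (n - 1) / 2 := by
  cases n with
  | zero => simp [qpolyDeriv2]
  | succ m =>
    simp only [qpolyDeriv2, one_pow, mul_one, add_tsub_cancel_right, sum_Icc_one_natCast_sub_one]
    push_cast
    ring

theorem abs_qpolyDeriv2_le (n : ℕ) {u : ℝ} (hu₀ : 0 ≤ u) (hu₁ : u ≤ 1) :
    |qpolyDeriv2 n u| ≤ 3 * n * (n - 1) / 2 := by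
  have hnonneg : 0 ≤ qpolyDeriv2 n u := by unfold qpolyDeriv2; positivity
  have hmono : qpolyDeriv2 n u ≤ qpolyDeriv2 n 1 := by unfold qpolyDeriv2; gcongr
  rwa [abs_of_nonneg hnonneg, ← qpolyDeriv2_one]

theorem deriv_deriv_freg_of_lt {n : ℕ} (hn : n ≠ 0) (ε : ℝ) {ρ : ℝ} (hρ : ρ < ε ^ 2) :
    deriv (deriv (freg n ε)) ρ =
      -(qpolyDeriv2 n (1 - ρ / ε ^ 2) / (ε ^ 2) ^ 2) := by
  have hq : freg n ε =ᶠ[𝓝 ρ] qfun n ε := by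
    filter_upwards [Iio_mem_nhds hρ] with x (hx : x < ε ^ 2)
    simp [freg, not_le.mpr hx]
  rw [hq.deriv.deriv_eq, qfun_eq_log_sub_qpoly]
  exact deriv_deriv_comp_one_sub_div (hasDerivAt_qpoly hn) (hasDerivAt_qpolyDeriv n) _ _ ρ

theorem deriv_deriv_freg_of_gt (n : ℕ) {ε ρ : ℝ} (hρ : ε ^ 2 < ρ) :
    deriv (deriv (freg n ε)) ρ = -(ρ ^ 2)⁻¹ := by
  have hlog : freg n ε =ᶠ[𝓝 ρ] Real.log := by
    filter_upwards [Ioi_mem_nhds hρ] with x (hx : ε ^ 2 < x)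
    simp [freg, hx.le]
  rw [hlog.deriv.deriv_eq, deriv_log']
  exact deriv_inv

theorem rpow_three_div_two_eq_mul_sqrt {ρ : ℝ} (hρ : 0 ≤ ρ) : ρ ^ ((3 : ℝ) / 2) = ρ * √ρ := by
  rw [sqrt_eq_rpow, ← rpow_one_add' hρ (by norm_num)]
  norm_num

theorem rpow_mul_abs_deriv_deriv_freg_le_of_lt {n : ℕ} (hn : n ≠ 0) {ε ρ : ℝ} (hε : 0 < ε)
    (hρ : 0 ≤ ρ) (hlt : ρ < ε ^ 2) :
    ρ ^ ((3 : ℝ) / 2) * |deriv (deriv (freg n ε)) ρ| ≤ 3 * n * (n - 1) / (2 * ε) := by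
  have hu₀ : 0 ≤ 1 - ρ / ε ^ 2 := by
    rw [sub_nonneg, div_le_one (by positivity)]
    exact hlt.le
  have hu₁ : 1 - ρ / ε ^ 2 ≤ 1 := by
    linarith [div_nonneg hρ (sq_nonneg ε)]
  have hsqrt : √ρ ≤ ε := (sqrt_le_sqrt hlt.le).trans_eq (sqrt_sq hε.le)
  rw [rpow_three_div_two_eq_mul_sqrt hρ, deriv_deriv_freg_of_lt hn ε hlt, abs_neg, abs_div,
    abs_of_pos (by positivity : 0 < (ε ^ 2) ^ 2)]
  calc ρ * √ρ * (|qpolyDeriv2 n (1 - ρ / ε ^ 2)| / (ε ^ 2) ^ 2)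
      ≤ ε ^ 2 * ε * (3 * n * (n - 1) / 2 / (ε ^ 2) ^ 2) := by
        gcongr
        exact abs_qpolyDeriv2_le n hu₀ hu₁
    _ = 3 * n * (n - 1) / (2 * ε) := by
        field_simp

theorem rpow_mul_abs_deriv_deriv_freg_le_of_gt (n : ℕ) {ε ρ : ℝ} (hε : 0 < ε)
    (hgt : ε ^ 2 < ρ) :
    ρ ^ ((3 : ℝ) / 2) * |deriv (deriv (freg n ε)) ρ| ≤ ε⁻¹ := by
  have hρ : 0 < ρ := (pow_pos hε 2).trans hgt
  rw [rpow_three_div_two_eq_mul_sqrt hρ.le, deriv_deriv_freg_of_gt n hgt, abs_neg, abs_inv,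
    abs_of_pos (pow_pos hρ 2)]
  calc ρ * √ρ * (ρ ^ 2)⁻¹ = (√ρ)⁻¹ := by
        have : 0 < √ρ := sqrt_pos.mpr hρ
        field_simp
        exact sq_sqrt hρ.le
    _ ≤ ε⁻¹ := inv_anti₀ hε (le_sqrt_of_sq_le hgt.le)

/-- For `n ≥ 3`, `ε > 0` and all `ρ ≥ 0` with `ρ ≠ ε²`,
`ρ^{3/2} |(f_n^ε)''(ρ)| ≤ 3n²/(2ε)`. -/
theorem stmt9 (n : ℕ) (hn : 3 ≤ n) (ε : ℝ) (hε : 0 < ε) :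
    ∀ ρ : ℝ, 0 ≤ ρ → ρ ≠ ε ^ 2 →
      ρ ^ ((3 : ℝ) / 2) * |deriv (deriv (freg n ε)) ρ| ≤ 3 * n ^ 2 / (2 * ε) := by
  intro ρ hρ hne
  have hn' : (3 : ℝ) ≤ n := by exact_mod_cast hn
  rcases hne.lt_or_gt with hlt | hgt
  · refine (rpow_mul_abs_deriv_deriv_freg_le_of_lt (by omega) hε hρ hlt).trans ?_
    exact div_le_div_of_nonneg_right (by nlinarith) (by positivity)
  · refine (rpow_mul_abs_deriv_deriv_freg_le_of_gt n hε hgt).trans ?_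
    rw [inv_eq_one_div, ← div_div]
    exact div_le_div_of_nonneg_right (by nlinarith) hε.le
end

section
/- Let Ω ⊂ ℝ^d be a measurable set of finite measure |Ω|, λ ∈ ℝ, n ≥ 2, 0 < ε ≤ 1, and u₀ : Ω → ℂ measurable. Then |∫_Ω λ(F(|u₀(x)|²) − F_n^ε(|u₀(x)|²)) dx| ≤ |λ|·|Ω|·ε², i.e., the regularized energy E_n^ε(u₀) converges quadratically in ε to the exact energy E(u₀). -/
open Real Complex MeasureTheory

/-- The interaction energy density `F(ρ) = ρ ln ρ − ρ` (with `F(0) = 0`,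
automatic since `Real.log 0 = 0`). -/
noncomputable def Fd (ρ : ℝ) : ℝ := ρ * Real.log ρ - ρ

/-- `Q_n^ε`, the degree-`n` Taylor polynomial of `ln ρ − 1` at `ρ = ε²`. -/
noncomputable def Qpoly (n : ℕ) (ε ρ : ℝ) : ℝ :=
  Real.log (ε ^ 2) - 1 - ∑ k ∈ Finset.Icc 1 n, (1 / (k : ℝ)) * (1 - ρ / ε ^ 2) ^ k

/-- The local energy regularization `F_n^ε`: equals `F` on `[ε², ∞)` and the
degree-`(n+1)` polynomial `ρ Q_n^ε(ρ)` on `[0, ε²)`. -/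
noncomputable def Freg (n : ℕ) (ε ρ : ℝ) : ℝ :=
  if ε ^ 2 ≤ ρ then Fd ρ else ρ * Qpoly n ε ρ

/-! On `0 < ρ < ε²` put `x = 1 - ρ / ε² ∈ (0, 1)`. Then `F(ρ) - F_n^ε(ρ)` is `ρ` times the
remainder of the degree-`n` Taylor expansion of `log (1 - x)`, which is at most
`x ^ (n + 1) / (1 - x) = x ^ (n + 1) ε² / ρ`. So the pointwise error is at most
`ε² x ^ (n + 1) ≤ ε²` (and it vanishes off `(0, ε²)`), and integrating over `Ω` gives `|Ω| ε²`. -/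

open Finset in
lemma sum_Icc_one_div_mul_pow (n : ℕ) (x : ℝ) :
    ∑ k ∈ Icc 1 n, (1 / (k : ℝ)) * x ^ k = ∑ i ∈ range n, x ^ (i + 1) / (i + 1) := by
  rw [← Ico_add_one_right_eq_Icc, sum_Ico_eq_sum_range, Nat.add_sub_cancel]
  refine sum_congr rfl fun i _ => ?_
  push_cast
  ring

lemma Fd_sub_Freg_of_lt {n : ℕ} {ε ρ : ℝ} (hρ : 0 < ρ) (hρε : ρ < ε ^ 2) :
    Fd ρ - Freg n ε ρ =
      ρ * (∑ i ∈ Finset.range n, (1 - ρ / ε ^ 2) ^ (i + 1) / (i + 1) +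
        Real.log (ρ / ε ^ 2)) := by
  rw [Freg, if_neg hρε.not_ge, Fd, Qpoly, sum_Icc_one_div_mul_pow,
    Real.log_div hρ.ne' (hρ.trans hρε).ne']
  ring

lemma abs_Fd_sub_Freg_le (n : ℕ) (ε : ℝ) {ρ : ℝ} (hρ : 0 ≤ ρ) :
    |Fd ρ - Freg n ε ρ| ≤ ε ^ 2 := by
  rcases le_or_gt (ε ^ 2) ρ with hερ | hρε
  · simp [Freg, hερ, sq_nonneg]
  rcases hρ.eq_or_lt with rfl | hρ
  · simp [Freg, hρε.not_ge, Fd, sq_nonneg]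
  have hε : 0 < ε ^ 2 := hρ.trans hρε
  set x := 1 - ρ / ε ^ 2 with hx
  have h1x : 1 - x = ρ / ε ^ 2 := sub_sub_cancel _ _
  have hx0 : 0 < x := by rw [hx, sub_pos, div_lt_one hε]; exact hρε
  have hx1 : x < 1 := by rw [hx, sub_lt_self_iff]; positivity
  have htaylor : |∑ i ∈ Finset.range n, x ^ (i + 1) / (i + 1) + Real.log (ρ / ε ^ 2)| ≤
      x ^ (n + 1) / (ρ / ε ^ 2) := by
    have := Real.abs_log_sub_add_sum_range_le (abs_lt.2 ⟨by linarith, hx1⟩) n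
    rwa [abs_of_pos hx0, h1x] at this
  rw [Fd_sub_Freg_of_lt hρ hρε, abs_mul, abs_of_pos hρ]
  calc ρ * |∑ i ∈ Finset.range n, x ^ (i + 1) / (i + 1) + Real.log (ρ / ε ^ 2)|
      ≤ ρ * (x ^ (n + 1) / (ρ / ε ^ 2)) := mul_le_mul_of_nonneg_left htaylor hρ.le
    _ = ε ^ 2 * x ^ (n + 1) := by field_simp
    _ ≤ ε ^ 2 := mul_le_of_le_one_right hε.le (pow_le_one₀ hx0.le hx1.le)

theorem stmt12_general (d : ℕ) (Ω : Set (Fin d → ℝ))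
    (hΩfin : volume Ω < ⊤) (lam : ℝ) (n : ℕ)
    (ε : ℝ) (u₀ : (Fin d → ℝ) → ℂ) :
    |∫ x in Ω, lam * (Fd (‖u₀ x‖ ^ 2) - Freg n ε (‖u₀ x‖ ^ 2))| ≤
      |lam| * (volume Ω).toReal * ε ^ 2 := by
  have hbound : ∀ x ∈ Ω, ‖Fd (‖u₀ x‖ ^ 2) - Freg n ε (‖u₀ x‖ ^ 2)‖ ≤ ε ^ 2 :=
    fun x _ => abs_Fd_sub_Freg_le n ε (sq_nonneg _)
  calc |∫ x in Ω, lam * (Fd (‖u₀ x‖ ^ 2) - Freg n ε (‖u₀ x‖ ^ 2))|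
      = |lam| * ‖∫ x in Ω, Fd (‖u₀ x‖ ^ 2) - Freg n ε (‖u₀ x‖ ^ 2)‖ := by
        rw [integral_const_mul, abs_mul, Real.norm_eq_abs]
    _ ≤ |lam| * (ε ^ 2 * volume.real Ω) :=
        mul_le_mul_of_nonneg_left (norm_setIntegral_le_of_norm_le_const hΩfin hbound)
          (abs_nonneg _)
    _ = |lam| * (volume Ω).toReal * ε ^ 2 := by rw [measureReal_def]; ring

/-- Quadratic convergence of the regularized energy on a finite-measure domain:
`|∫_Ω λ(F(|u₀|²) − F_n^ε(|u₀|²))| ≤ |λ| |Ω| ε²`. -/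
theorem stmt12 (d : ℕ) (Ω : Set (Fin d → ℝ)) (hΩ : MeasurableSet Ω)
    (hΩfin : volume Ω < ⊤) (lam : ℝ) (n : ℕ) (hn : 2 ≤ n)
    (ε : ℝ) (hε : 0 < ε) (hε1 : ε ≤ 1) (u₀ : (Fin d → ℝ) → ℂ)
    (hu : Measurable u₀) :
    |∫ x in Ω, lam * (Fd (‖u₀ x‖ ^ 2) - Freg n ε (‖u₀ x‖ ^ 2))| ≤
      |lam| * (volume Ω).toReal * ε ^ 2 :=
  stmt12_general d Ω hΩfin lam n ε u₀
end
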